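/- Let μ be a crystalline measure on ℝ such that for some constants c > 0 and h > 0: |x − x′| ≥ c·min{|x|^{−h}, 1} for all distinct x, x′ ∈ supp μ, and |y − y′| ≥ c·min{|y|^{−h}, 1} for all distinct y, y′ ∈ supp μ̂. Then μ is a Fourier quasicrystal, i.e. the total variation measures |μ| and |μ̂| are tempered distributions. -/

import Mathlib

open MeasureTheory SchwartzMap Filter FourierTransform Real Complex

noncomputable section

/-- Tempered distributions on ℝ. -/
abbrev TemperedDistribution' := SchwartzMap ℝ ℂ →L[ℂ] ℂ

/-- A set `E ⊆ ℝ` is discrete if its intersection with every bounded interval is finite. -/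
def IsDiscreteSet (E : Set ℝ) : Prop := ∀ r : ℝ, (E ∩ Set.Icc (-r) r).Finite

/-- `T` is the tempered distribution associated with the (locally finite, atomic) complex
measure `μ = Σ_λ c λ · δ_λ`: on every compactly supported test function the two agree
(the sum below is then a finite sum). -/
def Represents (T : TemperedDistribution') (c : ℝ → ℂ) : Prop :=
  ∀ φ : SchwartzMap ℝ ℂ, HasCompactSupport ⇑φ → T φ = ∑' x : ℝ, c x * φ x

/-- Fourier transform of a tempered distribution: `T̂(φ) = T(φ̂)`, where the Fourier
transform on Schwartz space uses the kernel `e^{-2πixt}`. -/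
def fourierTD (T : TemperedDistribution') : TemperedDistribution' :=
  T.comp (fourierTransformCLM ℂ)

/-- The total variation measure `|μ| = Σ_λ ‖c λ‖ · δ_λ` is a tempered distribution:
every Schwartz function is `|μ|`-integrable, and `φ ↦ ∫ φ d|μ|` is continuous
on the Schwartz space. -/
def VariationTempered (c : ℝ → ℂ) : Prop :=
  (∀ φ : SchwartzMap ℝ ℂ, Summable fun x : ℝ => ‖c x‖ * ‖φ x‖) ∧
  ∃ S : TemperedDistribution', ∀ φ : SchwartzMap ℝ ℂ, S φ = ∑' x : ℝ, (‖c x‖ : ℂ) * φ x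

/-- the model bump -/
def psib : ContDiffBump (0:ℝ) := ⟨1, 2, one_pos, one_lt_two⟩

/-- sup norms of iterated derivatives of the model bump -/
def bumpA (n : ℕ) : ℝ := ⨆ z : ℝ, ‖iteratedFDeriv ℝ n (⇑psib) z‖

lemma bumpA_bound (n : ℕ) (z : ℝ) : ‖iteratedFDeriv ℝ n (⇑psib) z‖ ≤ bumpA n := by
  apply le_ciSup (f := fun z : ℝ => ‖iteratedFDeriv ℝ n (⇑psib) z‖)
  have hcont : Continuous fun z : ℝ => ‖iteratedFDeriv ℝ n (⇑psib) z‖ :=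
    (psib.contDiff.continuous_iteratedFDeriv (by exact_mod_cast le_top)).norm
  have hcs : HasCompactSupport fun z : ℝ => ‖iteratedFDeriv ℝ n (⇑psib) z‖ :=
    (psib.hasCompactSupport.iteratedFDeriv n).norm
  obtain ⟨C, hC⟩ := hcont.bounded_above_of_compact_support hcs
  exact ⟨C, fun y hy => by obtain ⟨z, rfl⟩ := hy; simpa using hC z⟩

lemma bumpA_nonneg (n : ℕ) : 0 ≤ bumpA n := le_trans (norm_nonneg _) (bumpA_bound n 0)

lemma bump_spec (x ε : ℝ) (hε0 : 0 < ε) (hε1 : ε ≤ 1) :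
    ∃ φ : SchwartzMap ℝ ℂ, HasCompactSupport ⇑φ ∧ φ x = 1 ∧
      (∀ y, φ y ≠ 0 → |y - x| < 2 * ε) ∧
      ∀ k n : ℕ, SchwartzMap.seminorm ℂ k n φ ≤ (2 + |x|) ^ k * (bumpA n * ε⁻¹ ^ n) := by
  have hεinv : (0:ℝ) ≤ ε⁻¹ := inv_nonneg.2 hε0.le
  set g : ℝ → ℝ := fun y => psib (ε⁻¹ * (y + -x)) with hgdef
  have hgsm : ContDiff ℝ ((⊤:ℕ∞)) g := by
    have h2 : ContDiff ℝ ((⊤:ℕ∞)) fun y : ℝ => ε⁻¹ * (y + -x) :=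
      contDiff_const.mul (contDiff_id.add contDiff_const)
    exact psib.contDiff.comp h2
  have hgd : ∀ (n : ℕ) (y : ℝ),
      iteratedDeriv n g y = ε⁻¹ ^ n • iteratedDeriv n (⇑psib) (ε⁻¹ * (y + -x)) := by
    intro n y
    calc iteratedDeriv n g y
        = iteratedDeriv n (fun w : ℝ => psib (ε⁻¹ * w)) (y + -x) :=
          congrFun (iteratedDeriv_comp_add_const n (fun w : ℝ => psib (ε⁻¹ * w)) (-x)) y
      _ = ε⁻¹ ^ n • iteratedDeriv n (⇑psib) (ε⁻¹ * (y + -x)) :=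
          congrFun (iteratedDeriv_comp_const_smul psib.contDiff ε⁻¹) (y + -x)
  have hnorm : ∀ (n : ℕ) (y : ℝ), ‖iteratedFDeriv ℝ n g y‖ ≤ bumpA n * ε⁻¹ ^ n := by
    intro n y
    rw [norm_iteratedFDeriv_eq_norm_iteratedDeriv, hgd, norm_smul]
    have h1 : ‖ε⁻¹ ^ n‖ = ε⁻¹ ^ n := by
      rw [Real.norm_eq_abs, _root_.abs_pow, _root_.abs_of_nonneg hεinv]
    rw [h1, ← norm_iteratedFDeriv_eq_norm_iteratedDeriv, mul_comm]
    exact mul_le_mul_of_nonneg_right (bumpA_bound n _) (pow_nonneg hεinv n)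
  set φf : ℝ → ℂ := (⇑Complex.ofRealLI) ∘ g with hφfdef
  have hφsm : ContDiff ℝ ((⊤:ℕ∞)) φf :=
    Complex.ofRealLI.toContinuousLinearMap.contDiff.comp hgsm
  have hFC : ∀ (n : ℕ) (y : ℝ), ‖iteratedFDeriv ℝ n φf y‖ = ‖iteratedFDeriv ℝ n g y‖ :=
    fun n y => Complex.ofRealLI.norm_iteratedFDeriv_comp_left (hgsm.contDiffAt (x := y)) (by exact_mod_cast le_top)
  have hsupp : ∀ y : ℝ, φf y ≠ 0 → |y - x| < 2 * ε := by
    intro y hy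
    by_contra hcon
    push_neg at hcon
    apply hy
    have : psib (ε⁻¹ * (y + -x)) = 0 := by
      apply psib.zero_of_le_dist
      have : dist (ε⁻¹ * (y + -x)) 0 = ε⁻¹ * |y - x| := by
        rw [Real.dist_eq, sub_zero, abs_mul, _root_.abs_of_nonneg hεinv, ← sub_eq_add_neg]
      rw [this]
      show (2:ℝ) ≤ _
      calc (2:ℝ) = ε⁻¹ * (2 * ε) := by field_simp
        _ ≤ ε⁻¹ * |y - x| := by
            exact mul_le_mul_of_nonneg_left hcon hεinv
    simp [hφfdef, hgdef, Function.comp, this]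
  have htsp : tsupport φf ⊆ Metric.closedBall x (2 * ε) := by
    apply closure_minimal _ Metric.isClosed_closedBall
    intro y hy
    have := hsupp y hy
    rw [Metric.mem_closedBall, Real.dist_eq]
    exact this.le
  have keybound : ∀ (k n : ℕ) (y : ℝ),
      ‖y‖ ^ k * ‖iteratedFDeriv ℝ n φf y‖ ≤ (2 + |x|) ^ k * (bumpA n * ε⁻¹ ^ n) := by
    intro k n y
    by_cases hy : y ∈ tsupport φf
    · have hyx : |y - x| ≤ 2 * ε := by
        have := htsp hy; rwa [Metric.mem_closedBall, Real.dist_eq] at this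
      have h1 : ‖y‖ ≤ 2 + |x| := by
        have : |y| ≤ |x| + |y - x| := by
          calc |y| = |x + (y - x)| := by ring_nf
            _ ≤ |x| + |y - x| := abs_add_le _ _
        have h2 : |y - x| ≤ 2 := le_trans hyx (by linarith)
        rw [Real.norm_eq_abs]; linarith
      apply mul_le_mul
      · exact pow_le_pow_left₀ (norm_nonneg y) h1 k
      · rw [hFC]; exact hnorm n y
      · exact norm_nonneg _
      · positivity
    · have : iteratedFDeriv ℝ n φf y = 0 := by
        have hns : y ∉ Function.support (iteratedFDeriv ℝ n φf) :=
          fun hc => hy (support_iteratedFDeriv_subset n hc)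
        simpa [Function.mem_support, not_not] using hns
      rw [this, norm_zero, mul_zero]
      exact mul_nonneg (by positivity) (mul_nonneg (bumpA_nonneg n) (by positivity))
  refine ⟨⟨φf, hφsm, fun k n => ⟨_, keybound k n⟩⟩, ?_, ?_, ?_, ?_⟩
  · exact IsCompact.of_isClosed_subset (isCompact_closedBall x (2*ε)) (isClosed_tsupport _) htsp
  · show φf x = 1
    have hg1 : g x = 1 := by
      show psib (ε⁻¹ * (x + -x)) = 1
      have h0 : ε⁻¹ * (x + -x) = 0 := by ring
      rw [h0]
      exact psib.one_of_mem_closedBall (Metric.mem_closedBall_self (by norm_num [psib]))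
    show Complex.ofRealLI (g x) = 1
    rw [hg1]
    exact Complex.ofReal_one
  · exact hsupp
  · intro k n
    apply SchwartzMap.seminorm_le_bound
    · exact mul_nonneg (by positivity) (mul_nonneg (bumpA_nonneg n) (by positivity))
    · exact keybound k n

lemma count_card {E : Set ℝ} {δ R : ℝ} (hδ : 0 < δ) (hR : 0 ≤ R)
    (u : Finset ℝ)
    (husep : ∀ a ∈ u, ∀ b ∈ u, a ≠ b → δ ≤ |a - b|)
    (hu : ∀ a ∈ u, |a| ≤ R) :
    (u.card : ℝ) ≤ 2 * R / δ + 2 := by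
  classical
  set f : ℝ → ℤ := fun a => ⌊a / δ⌋ with hf
  have hinj : Set.InjOn f u := by
    intro a ha b hb hab
    by_contra hne
    have h1 : |a / δ - b / δ| < 1 := Int.abs_sub_lt_one_of_floor_eq_floor hab
    have h2 : |a - b| < δ := by
      have : a / δ - b / δ = (a - b) / δ := by ring
      rw [this, abs_div, _root_.abs_of_pos hδ, div_lt_one hδ] at h1
      exact h1
    exact absurd (husep a ha b hb hne) (not_le.2 h2)
  have hsub : u.image f ⊆ Finset.Icc ⌊(-R) / δ⌋ ⌊R / δ⌋ := by
    intro m hm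
    obtain ⟨a, ha, rfl⟩ := Finset.mem_image.1 hm
    have h1 : -R ≤ a := by have := hu a ha; cases abs_le.1 this; linarith
    have h2 : a ≤ R := (abs_le.1 (hu a ha)).2
    rw [Finset.mem_Icc]
    constructor
    · exact Int.floor_le_floor (by gcongr)
    · exact Int.floor_le_floor (by gcongr)
  have hcard : u.card ≤ (Finset.Icc ⌊(-R) / δ⌋ ⌊R / δ⌋).card := by
    rw [← Finset.card_image_of_injOn hinj]
    exact Finset.card_le_card hsub
  have hIcc : ((Finset.Icc ⌊(-R) / δ⌋ ⌊R / δ⌋).card : ℝ) ≤ 2 * R / δ + 2 := by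
    rw [Int.card_Icc]
    have hle : ⌊(-R) / δ⌋ ≤ ⌊R / δ⌋ :=
      Int.floor_le_floor (by gcongr; linarith)
    have h0 : (0:ℤ) ≤ ⌊R / δ⌋ + 1 - ⌊(-R) / δ⌋ := by omega
    have hkey : ((⌊R / δ⌋ + 1 - ⌊(-R) / δ⌋).toNat : ℝ) = (⌊R / δ⌋ : ℝ) + 1 - (⌊(-R) / δ⌋ : ℝ) := by
      rw_mod_cast [Int.toNat_of_nonneg h0]
    rw [hkey]
    have h1 : (⌊R / δ⌋ : ℝ) ≤ R / δ := Int.floor_le _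
    have h2 : (-R) / δ - 1 < ⌊(-R) / δ⌋ := by
      have := Int.sub_one_lt_floor ((-R) / δ); linarith [this]
    have : (2:ℝ) * R / δ = R / δ - (-R) / δ := by ring
    linarith
  calc (u.card : ℝ) ≤ ((Finset.Icc ⌊(-R) / δ⌋ ⌊R / δ⌋).card : ℝ) := by exact_mod_cast hcard
    _ ≤ 2 * R / δ + 2 := hIcc

lemma sum_weight_le {E : Set ℝ} {κ t h : ℝ} (hκ : 0 < κ) (hκ1 : κ ≤ 1) (hh : 0 < h)
    (ht : h + 3 ≤ t)
    (hsep : ∀ a ∈ E, ∀ b ∈ E, a ≠ b → κ * (1 + |a|) ^ (-h) ≤ |a - b|) :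
    ∃ W : ℝ, 0 ≤ W ∧ ∀ u : Finset ℝ, (∀ a ∈ u, a ∈ E) →
      ∑ a ∈ u, (1 + |a|) ^ (-t) ≤ W := by
  classical
  have hsum2 : Summable (fun n : ℕ => ((n : ℝ) + 1) ^ (-(2:ℝ))) := by
    have h1 : Summable (fun n : ℕ => ((n : ℝ)) ^ (-(2:ℝ))) :=
      (Real.summable_nat_rpow).2 (by norm_num)
    have h2 := (summable_nat_add_iff 1).2 h1
    simpa [Nat.cast_add, Nat.cast_one] using h2
  set E' : ℝ := (2 / κ + 2) * (2:ℝ) ^ (h + 1) with hE'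
  have hE'pos : 0 < E' := by positivity
  refine ⟨E' * ∑' n : ℕ, ((n : ℝ) + 1) ^ (-(2:ℝ)), ?_, ?_⟩
  · exact mul_nonneg hE'pos.le (tsum_nonneg fun n => Real.rpow_nonneg (by positivity) _)
  intro u hu
  set gfib : ℝ → ℕ := fun a => ⌊|a|⌋₊ with hg
  have hfib := Finset.sum_fiberwise_of_maps_to (s := u) (t := u.image gfib) (g := gfib)
      (f := fun a => (1 + |a|) ^ (-t))
      (fun a ha => Finset.mem_image_of_mem gfib ha)
  rw [← hfib]
  have hfiber : ∀ n ∈ u.image gfib,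
      ∑ a ∈ u.filter (fun a => gfib a = n), (1 + |a|) ^ (-t)
        ≤ E' * ((n:ℝ) + 1) ^ (-(2:ℝ)) := by
    intro n _
    set v := u.filter (fun a => gfib a = n) with hv
    have hmem : ∀ a ∈ v, a ∈ E ∧ (n:ℝ) ≤ |a| ∧ |a| ≤ (n:ℝ) + 1 := by
      intro a ha
      rw [hv, Finset.mem_filter] at ha
      obtain ⟨hau, hfl⟩ := ha
      refine ⟨hu a hau, ?_, ?_⟩
      · rw [← hfl]; exact Nat.floor_le (abs_nonneg a)
      · rw [← hfl]; exact (Nat.lt_floor_add_one |a|).le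
    have hN0 : (0:ℝ) ≤ (n:ℝ) := Nat.cast_nonneg n
    have hN1 : (1:ℝ) ≤ (n:ℝ) + 1 := by linarith
    set δ : ℝ := κ * ((n:ℝ) + 2) ^ (-h) with hδdef
    have hδpos : 0 < δ := by positivity
    have hsepv : ∀ a ∈ v, ∀ b ∈ v, a ≠ b → δ ≤ |a - b| := by
      intro a ha b hb hab
      refine le_trans ?_ (hsep a (hmem a ha).1 b (hmem b hb).1 hab)
      rw [hδdef]
      apply mul_le_mul_of_nonneg_left _ hκ.le
      apply Real.rpow_le_rpow_of_nonpos (by positivity) _ (by linarith)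
      linarith [(hmem a ha).2.2]
    have hcard := count_card (E := E) hδpos (by positivity : (0:ℝ) ≤ (n:ℝ) + 1) v hsepv
      (fun a ha => (hmem a ha).2.2)
    have hterm : ∀ a ∈ v, (1 + |a|) ^ (-t) ≤ ((n:ℝ) + 1) ^ (-t) := fun a ha =>
      Real.rpow_le_rpow_of_nonpos (by positivity) (by linarith [(hmem a ha).2.1]) (by linarith)
    have hone : (1:ℝ) ≤ ((n:ℝ) + 2) ^ (h + 1) := Real.one_le_rpow (by linarith) (by linarith)
    have hd : (2/κ) * ((n:ℝ)+2) ^ (h+1) * δ = 2 * ((n:ℝ)+2) := by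
      rw [hδdef, show (2/κ) * ((n:ℝ)+2)^(h+1) * (κ * ((n:ℝ)+2)^(-h))
          = (2/κ*κ) * (((n:ℝ)+2)^(h+1) * ((n:ℝ)+2)^(-h)) from by ring,
        ← Real.rpow_add (by positivity), show h + 1 + -h = (1:ℝ) from by ring, Real.rpow_one]
      field_simp
    have hA : 2 * ((n:ℝ)+1) / δ + 2 ≤ (2/κ + 2) * ((n:ℝ)+2) ^ (h+1) := by
      have hdiv : 2 * ((n:ℝ)+1) / δ ≤ (2/κ) * ((n:ℝ)+2) ^ (h+1) := by
        rw [div_le_iff₀ hδpos, hd]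
        linarith
      have h2' : (2:ℝ) ≤ 2 * ((n:ℝ)+2) ^ (h+1) := by linarith
      nlinarith [hone]
    have hB : ((n:ℝ)+2) ^ (h+1) ≤ (2:ℝ)^(h+1) * ((n:ℝ)+1) ^ (h+1) := by
      calc ((n:ℝ)+2) ^ (h+1) ≤ (2*((n:ℝ)+1)) ^ (h+1) :=
            Real.rpow_le_rpow (by positivity) (by linarith) (by linarith)
        _ = (2:ℝ)^(h+1) * ((n:ℝ)+1) ^ (h+1) := Real.mul_rpow (by norm_num) (by positivity)
    have hC : ((n:ℝ)+1) ^ (h+1) * ((n:ℝ)+1) ^ (-t) ≤ ((n:ℝ)+1) ^ (-(2:ℝ)) := by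
      rw [← Real.rpow_add (by positivity)]
      exact Real.rpow_le_rpow_of_exponent_le hN1 (by linarith)
    calc ∑ a ∈ v, (1 + |a|) ^ (-t) ≤ ∑ _a ∈ v, ((n:ℝ) + 1) ^ (-t) := Finset.sum_le_sum hterm
      _ = (v.card : ℝ) * ((n:ℝ) + 1) ^ (-t) := by rw [Finset.sum_const, nsmul_eq_mul]
      _ ≤ (2 * ((n:ℝ)+1) / δ + 2) * ((n:ℝ)+1) ^ (-t) :=
          mul_le_mul_of_nonneg_right hcard (Real.rpow_nonneg (by positivity) _)
      _ ≤ ((2/κ + 2) * ((n:ℝ)+2) ^ (h+1)) * ((n:ℝ)+1) ^ (-t) :=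
          mul_le_mul_of_nonneg_right hA (Real.rpow_nonneg (by positivity) _)
      _ ≤ ((2/κ + 2) * ((2:ℝ)^(h+1) * ((n:ℝ)+1) ^ (h+1))) * ((n:ℝ)+1) ^ (-t) := by
          have h2 : (0:ℝ) ≤ 2/κ + 2 := by positivity
          exact mul_le_mul_of_nonneg_right (mul_le_mul_of_nonneg_left hB h2)
            (Real.rpow_nonneg (by positivity) _)
      _ = E' * (((n:ℝ)+1) ^ (h+1) * ((n:ℝ)+1) ^ (-t)) := by rw [hE']; ring
      _ ≤ E' * ((n:ℝ)+1) ^ (-(2:ℝ)) := mul_le_mul_of_nonneg_left hC hE'pos.le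
  calc ∑ n ∈ u.image gfib, ∑ a ∈ u.filter (fun a => gfib a = n), (1 + |a|) ^ (-t)
      ≤ ∑ n ∈ u.image gfib, E' * ((n:ℝ) + 1) ^ (-(2:ℝ)) := Finset.sum_le_sum hfiber
    _ = E' * ∑ n ∈ u.image gfib, ((n:ℝ) + 1) ^ (-(2:ℝ)) := by rw [Finset.mul_sum]
    _ ≤ E' * ∑' n : ℕ, ((n : ℝ) + 1) ^ (-(2:ℝ)) := by
        apply mul_le_mul_of_nonneg_left _ hE'pos.le
        exact hsum2.sum_le_tsum _ (fun i _ => Real.rpow_nonneg (by positivity) _)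

lemma key (c : ℝ → ℂ) (T : TemperedDistribution') (hT : Represents T c)
    (c₀ h : ℝ) (hc₀ : 0 < c₀) (hh : 0 < h)
    (hsep : ∀ x ∈ Function.support c, ∀ x' ∈ Function.support c, x ≠ x' →
      c₀ * min (|x| ^ (-h)) 1 ≤ |x - x'|) : VariationTempered c := by
  classical
  set κ : ℝ := min c₀ 1 with hκdef
  have hκpos : 0 < κ := lt_min hc₀ one_pos
  have hκ1 : κ ≤ 1 := min_le_right _ _
  -- uniform separation on the support
  have hsep2 : ∀ a ∈ Function.support c, ∀ b ∈ Function.support c, a ≠ b →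
      κ * (1 + |a|) ^ (-h) ≤ |a - b| := by
    intro a ha b hb hab
    by_cases ha0 : a = 0
    · subst ha0
      have hb0 : b ≠ 0 := fun hb0 => hab (hb0.symm)
      have h1 := hsep b hb 0 ha hb0
      rw [sub_zero] at h1
      have habs : κ ≤ |b| := by
        rcases le_or_gt 1 |b| with hcase | hcase
        · exact le_trans hκ1 hcase
        · have hbpos : 0 < |b| := abs_pos.2 hb0
          have hge : (1:ℝ) ≤ |b| ^ (-h) :=
            Real.one_le_rpow_of_pos_of_le_one_of_nonpos hbpos hcase.le (by linarith)
          rw [min_eq_right hge, mul_one] at h1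
          exact le_trans (min_le_left c₀ 1) h1
      have : κ * (1 + |(0:ℝ)|) ^ (-h) = κ := by
        norm_num
      rw [this, zero_sub, abs_neg]
      exact habs
    · refine le_trans ?_ (hsep a ha b hb hab)
      have hapos : 0 < |a| := abs_pos.2 ha0
      have h2 : (1 + |a|) ^ (-h) ≤ |a| ^ (-h) :=
        Real.rpow_le_rpow_of_nonpos hapos (by linarith) (by linarith)
      have h3 : (1 + |a|) ^ (-h) ≤ 1 :=
        Real.rpow_le_one_of_one_le_of_nonpos (by linarith) (by linarith)
      exact mul_le_mul (min_le_left _ _) (le_min h2 h3)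
        (Real.rpow_nonneg (by positivity) _) hc₀.le
  -- continuity bound for T
  have hTcont : Continuous ⇑((normSeminorm ℂ ℂ).comp (T : SchwartzMap ℝ ℂ →ₗ[ℂ] ℂ)) := by
    show Continuous fun φ : SchwartzMap ℝ ℂ => ‖T φ‖
    exact T.continuous.norm
  obtain ⟨s, C, hC0, hTb⟩ := Seminorm.bound_of_continuous (schwartz_withSeminorms ℂ ℝ ℂ)
      ((normSeminorm ℂ ℂ).comp (T : SchwartzMap ℝ ℂ →ₗ[ℂ] ℂ)) hTcont
  have hTbound : ∀ φ : SchwartzMap ℝ ℂ,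
      ‖T φ‖ ≤ (C:ℝ) * (s.sup (schwartzSeminormFamily ℂ ℝ ℂ)) φ := by
    intro φ
    have := hTb φ
    simpa [Seminorm.smul_apply, NNReal.smul_def, smul_eq_mul] using this
  set K : ℕ := s.sup (fun i => max i.1 i.2) with hK
  set B : ℝ := 1 + ∑ j ∈ Finset.range (K+1), bumpA j with hB
  have hB1 : (1:ℝ) ≤ B := by
    have : (0:ℝ) ≤ ∑ j ∈ Finset.range (K+1), bumpA j :=
      Finset.sum_nonneg fun j _ => bumpA_nonneg j
    linarith
  have hB0 : (0:ℝ) ≤ B := by linarith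
  have hAB : ∀ n : ℕ, n ≤ K → bumpA n ≤ B := by
    intro n hn
    have h1 : bumpA n ≤ ∑ j ∈ Finset.range (K+1), bumpA j :=
      Finset.single_le_sum (fun j _ => bumpA_nonneg j) (Finset.mem_range.2 (by omega))
    linarith
  -- the coefficient bound
  set D : ℝ := (C:ℝ) * 2^K * B * (2/κ)^K with hD
  have hD0 : (0:ℝ) ≤ D := by positivity
  set R : ℝ := (K:ℝ) + h * (K:ℝ) with hR
  have hR0 : 0 ≤ R := by positivity
  have hcoef : ∀ x ∈ Function.support c, ‖c x‖ ≤ D * (1 + |x|) ^ R := by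
    intro x hx
    have habs0 : (0:ℝ) ≤ |x| := abs_nonneg x
    have hb1 : (0:ℝ) < 1 + |x| := by positivity
    set ε : ℝ := κ/2 * (1 + |x|) ^ (-h) with hε
    have hεpos : 0 < ε := by positivity
    have hrle1 : (1 + |x|) ^ (-h) ≤ 1 :=
      Real.rpow_le_one_of_one_le_of_nonpos (by linarith) (by linarith)
    have hεle1 : ε ≤ 1 := by
      rw [hε]
      nlinarith [Real.rpow_nonneg (le_of_lt hb1) (-h)]
    obtain ⟨φ, hφcs, hφx, hφsupp, hφsem⟩ := bump_spec x ε hεpos hεle1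
    have hTφ : T φ = c x := by
      rw [hT φ hφcs, tsum_eq_single x ?_]
      · rw [hφx, mul_one]
      · intro b hb
        by_cases hbc : c b = 0
        · rw [hbc, zero_mul]
        · have hbx : x ≠ b := fun hxb => hb hxb.symm
          have hs3 := hsep2 x hx b (Function.mem_support.2 hbc) hbx
          have hφb : φ b = 0 := by
            by_contra hφb
            have h4 := hφsupp b hφb
            have h5 : |x - b| = |b - x| := abs_sub_comm x b
            have h6 : 2 * ε = κ * (1 + |x|) ^ (-h) := by rw [hε]; ring
            rw [h5] at hs3
            rw [h6] at h4
            linarith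
          rw [hφb, mul_zero]
    have h1ε : 1 ≤ ε⁻¹ := by
      rw [← one_div]
      rw [le_div_iff₀ hεpos]
      linarith
    have hsup : (s.sup (schwartzSeminormFamily ℂ ℝ ℂ)) φ ≤ (2+|x|)^K * (B * ε⁻¹^K) := by
      apply Seminorm.finset_sup_apply_le
      · have h0 : (0:ℝ) ≤ ε⁻¹ := by positivity
        positivity
      · intro i hi
        have hik : i.1 ≤ K := le_trans (le_max_left _ _)
          (Finset.le_sup (f := fun i : ℕ × ℕ => max i.1 i.2) hi)
        have hin : i.2 ≤ K := le_trans (le_max_right _ _)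
          (Finset.le_sup (f := fun i : ℕ × ℕ => max i.1 i.2) hi)
        have h1 := hφsem i.1 i.2
        have h2 : (2+|x|)^i.1 ≤ (2+|x|)^K := pow_le_pow_right₀ (by linarith [abs_nonneg x]) hik
        have h3 : bumpA i.2 ≤ B := hAB i.2 hin
        have h4 : ε⁻¹^i.2 ≤ ε⁻¹^K := pow_le_pow_right₀ h1ε hin
        calc schwartzSeminormFamily ℂ ℝ ℂ i φ ≤ (2+|x|)^i.1 * (bumpA i.2 * ε⁻¹^i.2) := h1
          _ ≤ (2+|x|)^K * (B * ε⁻¹^K) := by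
            apply mul_le_mul h2 _ (mul_nonneg (bumpA_nonneg i.2) (by positivity)) (by positivity)
            exact mul_le_mul h3 h4 (by positivity) hB0
    have hcb : ‖c x‖ ≤ (C:ℝ) * ((2+|x|)^K * (B * ε⁻¹^K)) := by
      rw [← hTφ]
      exact le_trans (hTbound φ) (mul_le_mul_of_nonneg_left hsup C.coe_nonneg)
    have e1 : ε⁻¹ = (2/κ) * (1+|x|)^h := by
      rw [hε, mul_inv, Real.rpow_neg hb1.le, inv_inv, inv_div]
    have e2 : ((2:ℝ)+|x|)^K ≤ 2^K * (1+|x|)^K := by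
      calc ((2:ℝ)+|x|)^K ≤ (2*(1+|x|))^K := pow_le_pow_left₀ (by positivity) (by linarith) K
        _ = 2^K * (1+|x|)^K := mul_pow _ _ _
    have e3 : ε⁻¹^K = (2/κ)^K * ((1+|x|)^h)^K := by rw [e1, mul_pow]
    have e4 : (1+|x|)^K * ((1+|x|)^h)^K = (1 + |x|) ^ R := by
      rw [← Real.rpow_natCast (1+|x|) K, ← Real.rpow_natCast ((1+|x|)^h) K,
        ← Real.rpow_mul hb1.le, ← Real.rpow_add hb1, hR]
    calc ‖c x‖ ≤ (C:ℝ) * ((2+|x|)^K * (B * ε⁻¹^K)) := hcb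
      _ ≤ (C:ℝ) * ((2^K * (1+|x|)^K) * (B * ε⁻¹^K)) := by
          apply mul_le_mul_of_nonneg_left _ C.coe_nonneg
          apply mul_le_mul_of_nonneg_right e2
          exact mul_nonneg hB0 (by positivity)
      _ = D * ((1+|x|)^K * ((1+|x|)^h)^K) := by rw [e3, hD]; ring
      _ = D * (1 + |x|) ^ R := by rw [e4]
  -- choose the decay order
  set M : ℕ := ⌈R + h⌉₊ + 3 with hM
  have hMge : R + h + 3 ≤ (M:ℝ) := by
    have := Nat.le_ceil (R + h)
    rw [hM]
    push_cast
    linarith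
  set t : ℝ := (M:ℝ) - R with htdef
  have ht : h + 3 ≤ t := by rw [htdef]; linarith
  obtain ⟨W, hW0, hWsum⟩ := sum_weight_le (E := Function.support c) hκpos hκ1 hh ht hsep2
  set q : SchwartzMap ℝ ℂ → ℝ :=
    fun φ => ((Finset.Iic ((M:ℕ),(0:ℕ))).sup (schwartzSeminormFamily ℂ ℝ ℂ)) φ with hq
  have hq0 : ∀ φ, 0 ≤ q φ := fun φ => apply_nonneg _ φ
  -- pointwise estimate
  have hptw : ∀ (φ : SchwartzMap ℝ ℂ), ∀ x ∈ Function.support c,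
      ‖c x‖ * ‖φ x‖ ≤ (D * 2^M * q φ) * (1+|x|) ^ (-t) := by
    intro φ x hx
    have habs0 : (0:ℝ) ≤ |x| := abs_nonneg x
    have hb1 : (0:ℝ) < 1 + |x| := by positivity
    have hdecay := one_add_le_sup_seminorm_apply (𝕜 := ℂ) (m := ((M:ℕ),(0:ℕ)))
      le_rfl le_rfl φ x
    rw [norm_iteratedFDeriv_zero] at hdecay
    have hx' : ‖x‖ = |x| := rfl
    rw [hx'] at hdecay
    have hpow : (1+|x|)^(M:ℕ) = (1+|x|) ^ ((M:ℕ):ℝ) := (Real.rpow_natCast _ _).symm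
    have hφx : ‖φ x‖ ≤ 2^M * q φ * (1+|x|) ^ (-((M:ℕ):ℝ)) := by
      have hp2 : (0:ℝ) < (1+|x|)^(M:ℕ) := by positivity
      have hd2 : (1+|x|)^(M:ℕ) * ‖φ x‖ ≤ 2^M * q φ := hdecay
      have hstep : ‖φ x‖ ≤ (2^M * q φ) / (1+|x|)^(M:ℕ) := by
        rw [le_div_iff₀ hp2, mul_comm]
        exact hd2
      calc ‖φ x‖ ≤ (2^M * q φ) / (1+|x|)^(M:ℕ) := hstep
        _ = 2^M * q φ * (1+|x|) ^ (-((M:ℕ):ℝ)) := by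
            rw [Real.rpow_neg hb1.le, div_eq_mul_inv, hpow]
    calc ‖c x‖ * ‖φ x‖
        ≤ (D * (1+|x|)^R) * (2^M * q φ * (1+|x|) ^ (-((M:ℕ):ℝ))) := by
          apply mul_le_mul (hcoef x hx) hφx (norm_nonneg _)
          positivity
      _ = (D * 2^M * q φ) * ((1+|x|)^R * (1+|x|) ^ (-((M:ℕ):ℝ))) := by ring
      _ = (D * 2^M * q φ) * (1+|x|) ^ (-t) := by
          rw [← Real.rpow_add hb1]
          congr 1
          rw [htdef]
          ring_nf
  -- finite-sum bound
  have hfinsum : ∀ (φ : SchwartzMap ℝ ℂ) (u : Finset ℝ),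
      ∑ x ∈ u, ‖c x‖ * ‖φ x‖ ≤ (D * 2^M * W) * q φ := by
    intro φ u
    have hsplit : ∑ x ∈ u, ‖c x‖ * ‖φ x‖
        = ∑ x ∈ u.filter (fun x => c x ≠ 0), ‖c x‖ * ‖φ x‖ := by
      symm
      apply Finset.sum_filter_of_ne
      intro x _ hne hc0
      exact hne (by rw [hc0]; simp)
    rw [hsplit]
    have hmem : ∀ x ∈ u.filter (fun x => c x ≠ 0), x ∈ Function.support c := by
      intro x hxm
      exact Function.mem_support.2 (Finset.mem_filter.1 hxm).2
    calc ∑ x ∈ u.filter (fun x => c x ≠ 0), ‖c x‖ * ‖φ x‖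
        ≤ ∑ x ∈ u.filter (fun x => c x ≠ 0), (D * 2^M * q φ) * (1+|x|) ^ (-t) :=
          Finset.sum_le_sum fun x hxm => hptw φ x (hmem x hxm)
      _ = (D * 2^M * q φ) * ∑ x ∈ u.filter (fun x => c x ≠ 0), (1+|x|) ^ (-t) := by
          rw [Finset.mul_sum]
      _ ≤ (D * 2^M * q φ) * W := by
          apply mul_le_mul_of_nonneg_left (hWsum _ hmem)
          have := hq0 φ
          positivity
      _ = (D * 2^M * W) * q φ := by ring
  have hsummand : ∀ φ : SchwartzMap ℝ ℂ, Summable fun x : ℝ => ‖c x‖ * ‖φ x‖ := by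
    intro φ
    exact summable_of_sum_le (fun x => mul_nonneg (norm_nonneg _) (norm_nonneg _))
      (hfinsum φ)
  have hnormeq : ∀ φ : SchwartzMap ℝ ℂ,
      (fun x : ℝ => ‖(‖c x‖ : ℂ) * φ x‖) = fun x : ℝ => ‖c x‖ * ‖φ x‖ := by
    intro φ
    funext x
    rw [norm_mul, Complex.norm_real, Real.norm_of_nonneg (norm_nonneg _)]
  have hsummand' : ∀ φ : SchwartzMap ℝ ℂ, Summable fun x : ℝ => (‖c x‖ : ℂ) * φ x := by
    intro φ
    apply Summable.of_norm
    rw [hnormeq φ]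
    exact hsummand φ
  refine ⟨hsummand, ?_⟩
  set L : SchwartzMap ℝ ℂ →ₗ[ℂ] ℂ :=
    { toFun := fun φ => ∑' x : ℝ, (‖c x‖ : ℂ) * φ x,
      map_add' := fun φ γ => by
        simp only [SchwartzMap.add_apply, mul_add]
        exact Summable.tsum_add (hsummand' φ) (hsummand' γ),
      map_smul' := fun a φ => by
        simp only [SchwartzMap.smul_apply, RingHom.id_apply, smul_eq_mul]
        rw [← tsum_mul_left]
        congr 1
        funext x
        ring } with hL
  have hLbound : ∀ φ : SchwartzMap ℝ ℂ, ‖L φ‖ ≤ (D * 2^M * W) * q φ := by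
    intro φ
    have h1 : ‖L φ‖ ≤ ∑' x : ℝ, ‖(‖c x‖ : ℂ) * φ x‖ := by
      apply norm_tsum_le_tsum_norm
      rw [hnormeq φ]
      exact hsummand φ
    rw [hnormeq φ] at h1
    refine le_trans h1 ?_
    exact Summable.tsum_le_of_sum_le (hsummand φ) (hfinsum φ)
  have hLcont : Continuous L := by
    apply Seminorm.cont_withSeminorms_normedSpace ℂ (schwartz_withSeminorms ℂ ℝ ℂ) L
    refine ⟨Finset.Iic ((M:ℕ),(0:ℕ)), (D * 2^M * W).toNNReal, ?_⟩
    rw [Seminorm.le_def]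
    intro φ
    have h1 : ((normSeminorm ℂ ℂ).comp L) φ = ‖L φ‖ := rfl
    have h2 : (((D * 2^M * W).toNNReal : NNReal) •
        (Finset.Iic ((M:ℕ),(0:ℕ))).sup (schwartzSeminormFamily ℂ ℝ ℂ)) φ
        = ((D * 2^M * W).toNNReal : ℝ) * q φ := by
      simp [hq, Seminorm.smul_apply, NNReal.smul_def, smul_eq_mul]
    rw [h1, h2]
    refine le_trans (hLbound φ) ?_
    apply mul_le_mul_of_nonneg_right (Real.le_coe_toNNReal _) (hq0 φ)
  exact ⟨{ toLinearMap := L, cont := hLcont }, fun φ => rfl⟩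


/-- **Theorem (cf. [F0]).** Let `μ = Σ_λ c λ · δ_λ` be a crystalline measure (with
associated tempered distribution `T` and Fourier transform `μ̂ = Σ_λ ĉ λ · δ_λ`) whose
supports satisfy the separation conditions
`|x - x'| ≥ c₀ min(|x|^{-h}, 1)` on `supp μ` and `|y - y'| ≥ c₀ min(|y|^{-h}, 1)` on
`supp μ̂`, for some `c₀, h > 0`. Then `μ` is a Fourier quasicrystal: `|μ|` and `|μ̂|`
are tempered distributions. -/
theorem separated_crystalline_is_fourier_quasicrystal
    (c : ℝ → ℂ) (T : TemperedDistribution') (chat : ℝ → ℂ)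
    (hdisc : IsDiscreteSet (Function.support c))
    (hT : Represents T c)
    (hdisc' : IsDiscreteSet (Function.support chat))
    (hThat : Represents (fourierTD T) chat)
    (c₀ h : ℝ) (hc₀ : 0 < c₀) (hh : 0 < h)
    (hsep : ∀ x ∈ Function.support c, ∀ x' ∈ Function.support c, x ≠ x' →
      c₀ * min (|x| ^ (-h)) 1 ≤ |x - x'|)
    (hsep' : ∀ y ∈ Function.support chat, ∀ y' ∈ Function.support chat, y ≠ y' →
      c₀ * min (|y| ^ (-h)) 1 ≤ |y - y'|) :
    VariationTempered c ∧ VariationTempered chat :=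
  ⟨key c T hT c₀ h hc₀ hh hsep, key chat (fourierTD T) hThat c₀ h hc₀ hh hsep'⟩

end
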